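/- (Stationarity of the limiting zero range process.) Fix θ > 0, t > 0 and k ∈ ℕ, and set p = √t/(1+√t). Let π be the product probability measure on ℤ_{≥0}^k with π(x) = ∏_{i=1}^k q_{θ,p}(x_i). For x ∈ ℤ_{≥0}^k adopt the convention x_0 = 1 (position 0 is never empty), let e_1,…,e_k be the standard basis vectors of ℤ^k and e_0 = 0, and for 1 ≤ i ≤ k+1 let j(i,x) = max{ 0 ≤ j ≤ i−1 : x_j > 0 }. Define the generator (Lf)(x) = ∑_{i=1}^{k} [θ·(θ + x_i)/(1 + x_i)]·( f(x + e_i − e_{j(i,x)}) − f(x) ) + [θ·(1+√t)/√t]·( f(x − e_{j(k+1,x)}) − f(x) ) (where f(x − e_0) = f(x)). Then π is invariant for L: for every bounded function f: ℤ_{≥0}^k → ℝ, the sum ∑_{x ∈ ℤ_{≥0}^k} π(x)·(Lf)(x) converges absolutely and equals 0. -/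

import Mathlib

open Filter MeasureTheory

attribute [local instance] Classical.propDecidable

noncomputable section

/-- Negative binomial pmf `q_{θ,p}(n) = (1-p)^θ p^n Γ(n+θ)/(Γ(n+1)Γ(θ))`. -/
def negBinPMF (θ p : ℝ) (n : ℕ) : ℝ :=
  (1 - p) ^ θ * p ^ n * Real.Gamma ((n : ℝ) + θ) / (Real.Gamma ((n : ℝ) + 1) * Real.Gamma θ)

/-- The occupancy of site `j ∈ {0,1,…,k}` for configuration `x`, with an infinite pile at `0`. -/
def occ (k : ℕ) (x : Fin k → ℕ) (j : ℕ) : ℕ :=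
  if hj : 1 ≤ j ∧ j ≤ k then x ⟨j - 1, by omega⟩ else if j = 0 then 1 else 0

/-- `jmax k x i` is the largest `j ≤ i - 1` with a nonempty pile at `j`. -/
def jmax (k : ℕ) (x : Fin k → ℕ) (i : ℕ) : ℕ :=
  ((Finset.range i).filter (fun j => 0 < occ k x j)).sup id

/-- The configuration `x + e_i - e_j` (piles labelled `1,…,k`; labels outside act trivially). -/
def move (k : ℕ) (x : Fin k → ℕ) (i j : ℕ) : Fin k → ℕ :=
  fun r => (if (r : ℕ) + 1 = i then x r + 1 else x r) - if (r : ℕ) + 1 = j then 1 else 0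

/-- The generator `L` of the limiting zero range process. -/
def zrGen (θ t : ℝ) (k : ℕ) (f : (Fin k → ℕ) → ℝ) (x : Fin k → ℕ) : ℝ :=
  (∑ i : Fin k, θ * (θ + (x i : ℝ)) / (1 + (x i : ℝ)) *
      (f (move k x ((i : ℕ) + 1) (jmax k x ((i : ℕ) + 1))) - f x)) +
    θ * (1 + Real.sqrt t) / Real.sqrt t * (f (move k x 0 (jmax k x (k + 1))) - f x)

/-! ### Auxiliary lemmas -/

lemma negBin_pos {θ p : ℝ} (hθ : 0 < θ) (hp : 0 < p) (hp1 : p < 1) (n : ℕ) :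
    0 < negBinPMF θ p n := by
  unfold negBinPMF
  have h1 : (0:ℝ) < 1 - p := by linarith
  have h2 : (0:ℝ) < (n:ℝ) + θ := by positivity
  have h3 : (0:ℝ) < (n:ℝ) + 1 := by positivity
  have g1 := Real.Gamma_pos_of_pos h2
  have g2 := Real.Gamma_pos_of_pos h3
  have g3 := Real.Gamma_pos_of_pos hθ
  have h4 : (0:ℝ) < (1 - p) ^ θ := Real.rpow_pos_of_pos h1 θ
  have h5 : (0:ℝ) < p ^ n := pow_pos hp n
  exact div_pos (mul_pos (mul_pos h4 h5) g1) (mul_pos g2 g3)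

lemma negBin_succ {θ p : ℝ} (hθ : 0 < θ) (n : ℕ) :
    negBinPMF θ p (n + 1) = p * (((n : ℝ) + θ) / ((n : ℝ) + 1)) * negBinPMF θ p n := by
  unfold negBinPMF
  have hnθ : ((n : ℝ) + θ) ≠ 0 := by positivity
  have hn1 : ((n : ℝ) + 1) ≠ 0 := by positivity
  have e1 : ((n + 1 : ℕ) : ℝ) + θ = ((n : ℝ) + θ) + 1 := by push_cast; ring
  have e2 : ((n + 1 : ℕ) : ℝ) + 1 = ((n : ℝ) + 1) + 1 := by push_cast; ring
  rw [e1, e2, Real.Gamma_add_one hnθ, Real.Gamma_add_one hn1, pow_succ]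
  have g2 : Real.Gamma ((n : ℝ) + 1) ≠ 0 :=
    ne_of_gt (Real.Gamma_pos_of_pos (by positivity))
  have gθ : Real.Gamma θ ≠ 0 := ne_of_gt (Real.Gamma_pos_of_pos hθ)
  field_simp

lemma negBin_summable {θ p : ℝ} (hθ : 0 < θ) (hp : 0 < p) (hp1 : p < 1) :
    Summable (negBinPMF θ p) := by
  apply summable_of_ratio_test_tendsto_lt_one hp1
    (Filter.Eventually.of_forall fun n => ne_of_gt (negBin_pos hθ hp hp1 n))
  have key : ∀ n : ℕ, ‖negBinPMF θ p (n + 1)‖ / ‖negBinPMF θ p n‖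
      = p * (((n : ℝ) + θ) / ((n : ℝ) + 1)) := by
    intro n
    rw [Real.norm_eq_abs, Real.norm_eq_abs, abs_of_pos (negBin_pos hθ hp hp1 _),
      abs_of_pos (negBin_pos hθ hp hp1 _), negBin_succ hθ n, mul_div_assoc,
      div_self (ne_of_gt (negBin_pos hθ hp hp1 n)), mul_one]
  simp only [key]
  have h2 : Filter.Tendsto (fun n : ℕ => ((n : ℝ) + θ) / ((n : ℝ) + 1)) atTop (nhds 1) := by
    have h0 : Filter.Tendsto (fun n : ℕ => (θ - 1) * (1 / ((n : ℝ) + 1))) atTop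
        (nhds ((θ - 1) * 0)) :=
      tendsto_const_nhds.mul tendsto_one_div_add_atTop_nhds_zero_nat
    have heq : ∀ n : ℕ, ((n : ℝ) + θ) / ((n : ℝ) + 1) = 1 + (θ - 1) * (1 / ((n : ℝ) + 1)) := by
      intro n
      have hn1 : ((n : ℝ) + 1) ≠ 0 := by positivity
      field_simp
      ring
    simp only [heq]
    have := (tendsto_const_nhds (x := (1 : ℝ)) (f := atTop (α := ℕ))).add h0
    simpa using this
  have := (tendsto_const_nhds (x := p) (f := atTop (α := ℕ))).mul h2
  simpa using this

lemma prod_summable {q : ℕ → ℝ} (hq : Summable q) (hq0 : ∀ n, 0 ≤ q n) (k : ℕ) :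
    Summable (fun x : Fin k → ℕ => ∏ i, q (x i)) := by
  induction k with
  | zero =>
    exact summable_of_finite_support (Set.Finite.subset (Set.finite_univ) (by simp))
  | succ k ih =>
    have hm : Summable (fun z : ℕ × (Fin k → ℕ) => q z.1 * ∏ i, q (z.2 i)) :=
      Summable.mul_of_nonneg (f := q) (g := fun x : Fin k → ℕ => ∏ i, q (x i)) hq ih
        (Pi.le_def.mpr hq0) (Pi.le_def.mpr fun _ => Finset.prod_nonneg fun _ _ => hq0 _)
    rw [← (Fin.consEquiv (fun _ : Fin (k + 1) => ℕ)).summable_iff]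
    apply hm.congr
    rintro ⟨a, x⟩
    simp [Fin.consEquiv, Function.comp, Fin.prod_univ_succ]

lemma occ_zero (k : ℕ) (x : Fin k → ℕ) : occ k x 0 = 1 := by
  unfold occ
  simp

lemma occ_site (k : ℕ) (x : Fin k → ℕ) (i : Fin k) : occ k x ((i : ℕ) + 1) = x i := by
  unfold occ
  have h : 1 ≤ (i : ℕ) + 1 ∧ (i : ℕ) + 1 ≤ k := ⟨by omega, i.isLt⟩
  exact dif_pos h

lemma jmax_le (k m : ℕ) (x : Fin k → ℕ) : jmax k x (m + 1) ≤ m := by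
  unfold jmax
  apply Finset.sup_le
  intro j hj
  simp only [Finset.mem_filter, Finset.mem_range] at hj
  simpa [id] using Nat.lt_succ_iff.mp hj.1

lemma jmax_succ_pos (k m : ℕ) (x : Fin k → ℕ) (h : 0 < occ k x m) : jmax k x (m + 1) = m := by
  unfold jmax
  rw [Finset.range_add_one, Finset.filter_insert, if_pos h, Finset.sup_insert]
  have hle : ((Finset.range m).filter (fun j => 0 < occ k x j)).sup id ≤ m := by
    apply Finset.sup_le
    intro j hj
    simp only [Finset.mem_filter, Finset.mem_range] at hj
    simpa [id] using hj.1.le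
  simpa [id] using sup_eq_left.mpr hle

lemma jmax_succ_zero (k m : ℕ) (x : Fin k → ℕ) (h : ¬ 0 < occ k x m) :
    jmax k x (m + 1) = jmax k x m := by
  unfold jmax
  rw [Finset.range_add_one, Finset.filter_insert, if_neg h]

lemma jmax_one (k : ℕ) (x : Fin k → ℕ) : jmax k x 1 = 0 :=
  jmax_succ_pos k 0 x (by rw [occ_zero]; omega)

lemma move_zero_zero (k : ℕ) (y : Fin k → ℕ) : move k y 0 0 = y := by
  funext r
  unfold move
  have h0 : ¬ ((r : ℕ) + 1 = 0) := by omega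
  rw [if_neg h0, if_neg h0]
  omega

lemma occ_update (k : ℕ) (x : Fin k → ℕ) (i : Fin k) (v : ℕ) (j : ℕ) (hj : j ≤ (i : ℕ)) :
    occ k (Function.update x i v) j = occ k x j := by
  unfold occ
  split_ifs with h
  · have hne : (⟨j - 1, by omega⟩ : Fin k) ≠ i := by
      intro hc
      have hval := congrArg Fin.val hc
      simp only [Fin.val_mk] at hval
      omega
    exact Function.update_of_ne hne v x
  · rfl
  · rfl

lemma jmax_update (k : ℕ) (x : Fin k → ℕ) (i : Fin k) (v : ℕ) (m : ℕ) (hm : m ≤ (i : ℕ) + 1) :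
    jmax k (Function.update x i v) m = jmax k x m := by
  unfold jmax
  congr 1
  apply Finset.filter_congr
  intro j hj
  simp only [Finset.mem_range] at hj
  rw [occ_update k x i v j (by omega)]

lemma move_zero_up (k : ℕ) (x : Fin k → ℕ) (i : Fin k) (j : ℕ) :
    move k (Function.update x i (x i + 1)) 0 j = move k x ((i : ℕ) + 1) j := by
  funext r
  unfold move
  have h0 : ¬ ((r : ℕ) + 1 = 0) := by omega
  rw [if_neg h0]
  congr 1
  by_cases hr : r = i
  · subst hr
    rw [Function.update_self, if_pos rfl]
  · rw [Function.update_of_ne hr, if_neg (fun hc => hr (Fin.ext (by omega)))]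

lemma move_up_self (k : ℕ) (x : Fin k → ℕ) (i : Fin k) :
    move k (Function.update x i (x i + 1)) 0 ((i : ℕ) + 1) = x := by
  funext r
  unfold move
  have h0 : ¬ ((r : ℕ) + 1 = 0) := by omega
  rw [if_neg h0]
  by_cases hr : r = i
  · subst hr
    rw [Function.update_self, if_pos rfl]
    omega
  · rw [Function.update_of_ne hr, if_neg (fun hc => hr (Fin.ext (by omega))), Nat.sub_zero]

lemma up_injective (k : ℕ) (i : Fin k) :
    Function.Injective (fun x : Fin k → ℕ => Function.update x i (x i + 1)) := by
  intro a b hab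
  funext r
  have h := congrFun hab r
  by_cases hr : r = i
  · subst hr
    simp only [Function.update_self] at h
    omega
  · simpa [Function.update_of_ne hr] using h

/-- The telescoping identity. -/
lemma telescope (k : ℕ) (f : (Fin k → ℕ) → ℝ) (y : Fin k → ℕ) (m : ℕ) (hm : m ≤ k) :
    ∑ i ∈ Finset.univ.filter (fun i : Fin k => (i : ℕ) < m),
      (if 1 ≤ y i then
        f (move k y 0 (jmax k y ((i : ℕ) + 1))) - f (move k y 0 ((i : ℕ) + 1)) else 0)
    = f y - f (move k y 0 (jmax k y (m + 1))) := by
  induction m with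
  | zero =>
    rw [jmax_one, move_zero_zero]
    simp
  | succ m ih =>
    have hm' : m ≤ k := by omega
    have hins : Finset.univ.filter (fun i : Fin k => (i : ℕ) < m + 1)
        = insert (⟨m, by omega⟩ : Fin k) (Finset.univ.filter (fun i : Fin k => (i : ℕ) < m)) := by
      ext r
      simp only [Finset.mem_filter, Finset.mem_univ, true_and, Finset.mem_insert, Fin.ext_iff]
      omega
    rw [hins, Finset.sum_insert (by simp), ih hm']
    by_cases hy : 1 ≤ y (⟨m, by omega⟩ : Fin k)
    · rw [if_pos hy]
      have h1 : 0 < occ k y (m + 1) := by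
        have := occ_site k y (⟨m, by omega⟩ : Fin k)
        simp only [Fin.val_mk] at this
        omega
      rw [jmax_succ_pos k (m + 1) y h1]
      simp only [Fin.val_mk]
      ring
    · rw [if_neg hy]
      have h1 : ¬ 0 < occ k y (m + 1) := by
        have := occ_site k y (⟨m, by omega⟩ : Fin k)
        simp only [Fin.val_mk] at this
        omega
      rw [jmax_succ_zero k (m + 1) y h1]
      ring

/-- Abstract stationarity: if the rates satisfy `q n · lam n = μ · q (n+1)` then the product
measure with marginals `q` annihilates the generator. -/
lemma stationarity_aux (k : ℕ) (f : (Fin k → ℕ) → ℝ) (C : ℝ) (hC : ∀ x, |f x| ≤ C)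
    (q : ℕ → ℝ) (lam : ℕ → ℝ) (μ B : ℝ)
    (hq0 : ∀ n, 0 < q n) (hqs : Summable q)
    (hlam : ∀ n, |lam n| ≤ B)
    (hkey : ∀ n, q n * lam n = μ * q (n + 1)) :
    Summable (fun x : Fin k → ℕ => (∏ i, q (x i)) *
      ((∑ i : Fin k, lam (x i) * (f (move k x ((i : ℕ) + 1) (jmax k x ((i : ℕ) + 1))) - f x)) +
        μ * (f (move k x 0 (jmax k x (k + 1))) - f x))) ∧
    ∑' x : Fin k → ℕ, (∏ i, q (x i)) *
      ((∑ i : Fin k, lam (x i) * (f (move k x ((i : ℕ) + 1) (jmax k x ((i : ℕ) + 1))) - f x)) +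
        μ * (f (move k x 0 (jmax k x (k + 1))) - f x)) = 0 := by
  have hC0 : 0 ≤ C := (abs_nonneg _).trans (hC fun _ => 0)
  have hP0 : ∀ x : Fin k → ℕ, 0 < ∏ i, q (x i) :=
    fun x => Finset.prod_pos fun i _ => hq0 _
  have hPs : Summable (fun x : Fin k → ℕ => ∏ i, q (x i)) :=
    prod_summable hqs (fun n => (hq0 n).le) k
  -- summability of products with bounded multipliers
  have hsummul : ∀ (g : (Fin k → ℕ) → ℝ) (M : ℝ), (∀ x, |g x| ≤ M) →
      Summable (fun x : Fin k → ℕ => (∏ i, q (x i)) * g x) := by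
    intro g M hg
    apply Summable.of_abs
    apply Summable.of_nonneg_of_le (fun x => abs_nonneg _) (fun x => ?_) (hPs.mul_right M)
    rw [abs_mul, abs_of_pos (hP0 x)]
    exact mul_le_mul_of_nonneg_left (hg x) (hP0 x).le
  have hΔ : ∀ u v : Fin k → ℕ, |f u - f v| ≤ 2 * C := by
    intro u v
    have h1 := hC u
    have h2 := hC v
    calc |f u - f v| ≤ |f u| + |f v| := abs_sub _ _
    _ ≤ 2 * C := by linarith
  -- the three families of summands
  have hsumA : ∀ i : Fin k, Summable (fun x : Fin k → ℕ => (∏ j, q (x j)) *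
      (lam (x i) * (f (move k x ((i : ℕ) + 1) (jmax k x ((i : ℕ) + 1))) - f x))) := by
    intro i
    apply hsummul _ (B * (2 * C))
    intro x
    rw [abs_mul]
    exact mul_le_mul (hlam _) (hΔ _ _) (abs_nonneg _) ((abs_nonneg _).trans (hlam 0))
  have hsumB : Summable (fun x : Fin k → ℕ => (∏ j, q (x j)) *
      (μ * (f (move k x 0 (jmax k x (k + 1))) - f x))) := by
    apply hsummul _ (|μ| * (2 * C))
    intro x
    rw [abs_mul]
    exact mul_le_mul_of_nonneg_left (hΔ _ _) (abs_nonneg _)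
  have hsumT : ∀ i : Fin k, Summable (fun y : Fin k → ℕ => (∏ j, q (y j)) *
      (μ * (if 1 ≤ y i then
        f (move k y 0 (jmax k y ((i : ℕ) + 1))) - f (move k y 0 ((i : ℕ) + 1)) else 0))) := by
    intro i
    apply hsummul _ (|μ| * (2 * C))
    intro y
    rw [abs_mul]
    apply mul_le_mul_of_nonneg_left _ (abs_nonneg _)
    by_cases hy : 1 ≤ y i
    · rw [if_pos hy]; exact hΔ _ _
    · rw [if_neg hy]; simpa using by positivity
  -- the pointwise expansion of the summand
  have hexp : ∀ x : Fin k → ℕ, (∏ i, q (x i)) *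
      ((∑ i : Fin k, lam (x i) * (f (move k x ((i : ℕ) + 1) (jmax k x ((i : ℕ) + 1))) - f x)) +
        μ * (f (move k x 0 (jmax k x (k + 1))) - f x))
      = (∑ i : Fin k, (∏ j, q (x j)) *
          (lam (x i) * (f (move k x ((i : ℕ) + 1) (jmax k x ((i : ℕ) + 1))) - f x))) +
        (∏ j, q (x j)) * (μ * (f (move k x 0 (jmax k x (k + 1))) - f x)) := by
    intro x
    rw [mul_add, Finset.mul_sum]
  -- rate/measure exchange
  have hPrate : ∀ (i : Fin k) (x : Fin k → ℕ),
      (∏ j, q (x j)) * lam (x i) = μ * ∏ j, q (Function.update x i (x i + 1) j) := by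
    intro i x
    have h1 : (∏ j, q (x j)) = q (x i) * ∏ j ∈ Finset.univ.erase i, q (x j) :=
      (Finset.mul_prod_erase Finset.univ (fun j => q (x j)) (Finset.mem_univ i)).symm
    have h2 : (∏ j, q (Function.update x i (x i + 1) j))
        = q (x i + 1) * ∏ j ∈ Finset.univ.erase i, q (x j) := by
      rw [← Finset.mul_prod_erase Finset.univ (fun j => q (Function.update x i (x i + 1) j))
        (Finset.mem_univ i), Function.update_self]
      congr 1
      exact Finset.prod_congr rfl fun j hj => by
        rw [Function.update_of_ne (Finset.ne_of_mem_erase hj)]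
    rw [h1, h2, mul_right_comm, hkey, mul_assoc]
  -- identification of the `i`-th summand with `T i ∘ up i`
  have hA : ∀ (i : Fin k) (x : Fin k → ℕ),
      (∏ j, q (x j)) * (lam (x i) * (f (move k x ((i : ℕ) + 1) (jmax k x ((i : ℕ) + 1))) - f x))
      = (∏ j, q (Function.update x i (x i + 1) j)) *
          (μ * (if 1 ≤ Function.update x i (x i + 1) i then
            f (move k (Function.update x i (x i + 1)) 0
                (jmax k (Function.update x i (x i + 1)) ((i : ℕ) + 1)))
            - f (move k (Function.update x i (x i + 1)) 0 ((i : ℕ) + 1)) else 0)) := by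
    intro i x
    rw [Function.update_self, if_pos (by omega), jmax_update k x i (x i + 1) ((i : ℕ) + 1) le_rfl,
      move_zero_up, move_up_self]
    rw [← mul_assoc, hPrate i x]
    ring
  -- reindexing: sum of `T i ∘ up i` equals sum of `T i`
  have hreix : ∀ i : Fin k,
      (∑' x : Fin k → ℕ, (∏ j, q (x j)) *
        (lam (x i) * (f (move k x ((i : ℕ) + 1) (jmax k x ((i : ℕ) + 1))) - f x)))
      = ∑' y : Fin k → ℕ, (∏ j, q (y j)) *
          (μ * (if 1 ≤ y i then
            f (move k y 0 (jmax k y ((i : ℕ) + 1))) - f (move k y 0 ((i : ℕ) + 1)) else 0)) := by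
    intro i
    rw [tsum_congr (hA i)]
    refine Function.Injective.tsum_eq (up_injective k i)
      (f := fun y => (∏ j, q (y j)) * (μ * (if 1 ≤ y i then
        f (move k y 0 (jmax k y ((i : ℕ) + 1))) - f (move k y 0 ((i : ℕ) + 1)) else 0))) ?_
    intro y hy
    rw [Function.mem_support] at hy
    by_cases h1 : 1 ≤ y i
    · exact ⟨Function.update y i (y i - 1), by
        simp only [Function.update_idem, Function.update_self]
        rw [show y i - 1 + 1 = y i by omega, Function.update_eq_self]⟩
    · exact absurd (by rw [if_neg h1, mul_zero, mul_zero]) hy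
  -- pointwise telescoping
  have hpoint : ∀ y : Fin k → ℕ,
      (∑ i : Fin k, (∏ j, q (y j)) *
        (μ * (if 1 ≤ y i then
          f (move k y 0 (jmax k y ((i : ℕ) + 1))) - f (move k y 0 ((i : ℕ) + 1)) else 0)))
      + (∏ j, q (y j)) * (μ * (f (move k y 0 (jmax k y (k + 1))) - f y)) = 0 := by
    intro y
    have htel := telescope k f y k le_rfl
    rw [Finset.filter_true_of_mem (fun i _ => i.isLt)] at htel
    have hsum : (∑ i : Fin k, (∏ j, q (y j)) *
        (μ * (if 1 ≤ y i then
          f (move k y 0 (jmax k y ((i : ℕ) + 1))) - f (move k y 0 ((i : ℕ) + 1)) else 0)))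
        = (∏ j, q (y j)) * μ * (f y - f (move k y 0 (jmax k y (k + 1)))) := by
      rw [← htel, Finset.mul_sum]
      exact Finset.sum_congr rfl fun i _ => by ring
    rw [hsum]
    ring
  constructor
  · apply Summable.congr _ (fun x => (hexp x).symm)
    exact (summable_sum (fun i _ => hsumA i)).add hsumB
  · rw [tsum_congr hexp, Summable.tsum_add (summable_sum (fun i _ => hsumA i)) hsumB,
      Summable.tsum_finsetSum (fun i _ => hsumA i)]
    have : (∑ i : Fin k, ∑' x : Fin k → ℕ, (∏ j, q (x j)) *
        (lam (x i) * (f (move k x ((i : ℕ) + 1) (jmax k x ((i : ℕ) + 1))) - f x)))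
        = ∑ i : Fin k, ∑' y : Fin k → ℕ, (∏ j, q (y j)) *
          (μ * (if 1 ≤ y i then
            f (move k y 0 (jmax k y ((i : ℕ) + 1))) - f (move k y 0 ((i : ℕ) + 1)) else 0)) :=
      Finset.sum_congr rfl fun i _ => hreix i
    rw [this, ← Summable.tsum_finsetSum (fun i _ => hsumT i),
      ← Summable.tsum_add (summable_sum (fun i _ => hsumT i)) hsumB, tsum_congr hpoint, tsum_zero]

/-- Stationarity of the limiting zero range process: the product of negative binomial
distributions with parameters `(θ, √t/(1+√t))` is invariant for the generator `L`. -/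
theorem zero_range_stationarity
    (θ t : ℝ) (hθ : 0 < θ) (ht : 0 < t) (k : ℕ) (hk : 1 ≤ k)
    (f : (Fin k → ℕ) → ℝ) (hf : ∃ C : ℝ, ∀ x, |f x| ≤ C) :
    Summable (fun x : Fin k → ℕ =>
        (∏ i : Fin k, negBinPMF θ (Real.sqrt t / (1 + Real.sqrt t)) (x i)) * zrGen θ t k f x) ∧
    ∑' x : Fin k → ℕ,
        (∏ i : Fin k, negBinPMF θ (Real.sqrt t / (1 + Real.sqrt t)) (x i)) * zrGen θ t k f x =
      0 := by
  obtain ⟨C, hC⟩ := hf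
  have hst : 0 < Real.sqrt t := Real.sqrt_pos.mpr ht
  have h1s : (0:ℝ) < 1 + Real.sqrt t := by linarith
  have hp : 0 < Real.sqrt t / (1 + Real.sqrt t) := div_pos hst h1s
  have hp1 : Real.sqrt t / (1 + Real.sqrt t) < 1 := by
    rw [div_lt_one h1s]; linarith
  have hμp : (θ * (1 + Real.sqrt t) / Real.sqrt t) * (Real.sqrt t / (1 + Real.sqrt t)) = θ := by
    field_simp
  have hlamB : ∀ n : ℕ, |θ * (θ + (n : ℝ)) / (1 + (n : ℝ))| ≤ θ * (θ + 1) := by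
    intro n
    have hn0 : (0:ℝ) ≤ (n : ℝ) := Nat.cast_nonneg n
    have hn : (0:ℝ) < 1 + (n : ℝ) := by linarith
    rw [abs_of_nonneg (div_nonneg (mul_nonneg hθ.le (by linarith)) hn.le), div_le_iff₀ hn]
    nlinarith [mul_nonneg (mul_nonneg hθ.le hθ.le) hn0, mul_nonneg hθ.le hn0]
  have hkey : ∀ n : ℕ, negBinPMF θ (Real.sqrt t / (1 + Real.sqrt t)) n *
      (θ * (θ + (n : ℝ)) / (1 + (n : ℝ)))
      = (θ * (1 + Real.sqrt t) / Real.sqrt t) *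
        negBinPMF θ (Real.sqrt t / (1 + Real.sqrt t)) (n + 1) := by
    intro n
    rw [negBin_succ hθ n]
    have h2 : θ * (θ + (n : ℝ)) / (1 + (n : ℝ))
        = (θ * (1 + Real.sqrt t) / Real.sqrt t) *
          ((Real.sqrt t / (1 + Real.sqrt t)) * (((n : ℝ) + θ) / ((n : ℝ) + 1))) := by
      rw [← mul_assoc, hμp, add_comm (n : ℝ) θ, add_comm (n : ℝ) 1, mul_div_assoc]
    rw [h2]
    ring
  have main := stationarity_aux k f C hC (negBinPMF θ (Real.sqrt t / (1 + Real.sqrt t)))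
    (fun n => θ * (θ + (n : ℝ)) / (1 + (n : ℝ))) (θ * (1 + Real.sqrt t) / Real.sqrt t)
    (θ * (θ + 1)) (negBin_pos hθ hp hp1) (negBin_summable hθ hp hp1) hlamB hkey
  exact main

end
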